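/- Let R be a one-dimensional Gorenstein local ring and I an ideal containing a regular element such that End_R(I) = R (as subrings of Q(R)). Then I is principal. -/

import Mathlib

open CategoryTheory TensorProduct IsLocalRing

noncomputable section

/-- The minimal number of generators of an `R`-module `M`. -/
def minGen (R M : Type) [CommRing R] [AddCommGroup M] [Module R M] : ℕ :=
  sInf {n | ∃ s : Finset M, s.card = n ∧ Submodule.span R (s : Set M) = ⊤}

/-- `M` has (generic) rank `r`: at every associated prime of `R`, the localization
of `M` is free of rank `r`. -/
def HasRank (R M : Type) [CommRing R] [AddCommGroup M] [Module R M] (r : ℕ) : Prop :=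
  ∀ (p : Ideal R) (hp : p ∈ associatedPrimes R R),
    letI : p.IsPrime := hp.1
    Module.Free (Localization p.primeCompl) (LocalizedModule p.primeCompl M) ∧
      Module.finrank (Localization p.primeCompl) (LocalizedModule p.primeCompl M) = r

/-- The length of a module, as the Krull dimension of its submodule lattice. -/
def mlength (R M : Type) [CommRing R] [AddCommGroup M] [Module R M] : WithBot ℕ∞ :=
  Order.krullDim (Submodule R M)

/-- The Hilbert–Samuel multiplicity of a one-dimensional local ring `R` is `e`:
the difference `λ(R/m^{n+1}) - λ(R/m^n)` is eventually the constant `e`. -/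
def IsMultiplicity (R : Type) [CommRing R] [IsLocalRing R] (e : ℕ) : Prop :=
  ∃ N : ℕ, ∀ n ≥ N,
    mlength R (R ⧸ (maximalIdeal R ^ (n + 1))) =
      mlength R (R ⧸ (maximalIdeal R ^ n)) + ((e : ℕ∞) : WithBot ℕ∞)

/-- `Ext^n_R(M, N)`. -/
abbrev extKGroup (R M N : Type) [CommRing R] [AddCommGroup M] [Module R M]
    [AddCommGroup N] [Module R N] (n : ℕ) : ModuleCat R :=
  ((Ext R (ModuleCat R) n).obj (Opposite.op (ModuleCat.of R M))).obj (ModuleCat.of R N)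

/-- The canonical evaluation map `M ⊗_R M^* → R`. -/
def evalMap (R M : Type) [CommRing R] [AddCommGroup M] [Module R M] :
    M ⊗[R] (M →ₗ[R] R) →ₗ[R] R :=
  TensorProduct.lift LinearMap.applyₗ

/-- The trace ideal of `M`: the image of the evaluation map `M ⊗_R M^* → R`. -/
def traceIdeal (R M : Type) [CommRing R] [AddCommGroup M] [Module R M] : Ideal R :=
  LinearMap.range (evalMap R M)

/-- A (Noetherian) local ring is Gorenstein of dimension one: it has Krull dimension one
and there is a regular element `x` in the maximal ideal (= the nonunits) such that
`R/(x)` is self-injective. -/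
def IsGorensteinLocalOfDimOne (R : Type) [CommRing R] : Prop :=
  IsNoetherianRing R ∧ IsLocalRing R ∧ ringKrullDim R = 1 ∧
    ∃ x ∈ nonunits R, x ∈ nonZeroDivisors R ∧
      Module.Injective (R ⧸ Ideal.span {x}) (R ⧸ Ideal.span {x})

/-- A (Noetherian) local ring of dimension at most one is Gorenstein. -/
def IsGorensteinLocalOfDimLEOne (A : Type) [CommRing A] : Prop :=
  IsNoetherianRing A ∧ IsLocalRing A ∧
    (Module.Injective A A ∨
      (ringKrullDim A = 1 ∧ ∃ x ∈ nonunits A, x ∈ nonZeroDivisors A ∧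
        Module.Injective (A ⧸ Ideal.span {x}) (A ⧸ Ideal.span {x})))

/-- The multiplier set `{α ∈ Q | αA ⊆ A}` of a subset `A` of a ring `Q`. -/
def multEnd {Q : Type} [CommRing Q] (A : Set Q) : Set Q :=
  {α | ∀ a ∈ A, α * a ∈ A}

/-- The image of an ideal `I` in the total quotient ring. -/
def idealImage (R : Type) [CommRing R] (I : Ideal R) : Set (FractionRing R) :=
  algebraMap R (FractionRing R) '' (I : Set R)

/-- `End_R(I) = {α ∈ Q(R) | α I ⊆ I}` as a submodule of the total quotient ring. -/
def endSubmodule (R : Type) [CommRing R] (I : Ideal R) : Submodule R (FractionRing R) where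
  carrier := multEnd (idealImage R I)
  add_mem' := by
    intro a b ha hb x hx
    rw [add_mul]
    obtain ⟨ya, hya, ea⟩ := ha x hx
    obtain ⟨yb, hyb, eb⟩ := hb x hx
    exact ⟨ya + yb, add_mem hya hyb, by rw [map_add, ea, eb]⟩
  zero_mem' := by
    intro x hx
    exact ⟨0, zero_mem _, by rw [map_zero, zero_mul]⟩
  smul_mem' := by
    intro c a ha x hx
    obtain ⟨y, hy, ey⟩ := ha x hx
    refine ⟨c • y, Submodule.smul_mem _ _ hy, ?_⟩
    rw [Algebra.smul_def, Algebra.smul_def, map_mul, ey, mul_assoc, Algebra.algebraMap_self, RingHom.id_apply]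


/-!
If `I ((x) : I) ⊄ x𝔪` for a regular `x ∈ I`, then `i r = x` for some `i ∈ I` and some `r` with
`r I ⊆ (x)`, and `I = (i)`. Otherwise let `s` be a socle element of `R ⧸ (t)`, where `R ⧸ (t)` is
self-injective. Self-injectivity passes to `R ⧸ (t ^ n)` and, since `x ∣ t ^ n` for large `n`,
every ideal of `R ⧸ (x)` is its own double annihilator; this forces `s I ⊆ t I`. Hence
`s / t ∈ End(I) = R`, contradicting `s ∉ (t)`.
-/

open nonZeroDivisors

section

variable {R : Type} [CommRing R]

theorem exists_maximalIdeal_pow_le_span_singleton [IsNoetherianRing R] [IsLocalRing R]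
    (hdim : ringKrullDim R ≤ 1) {x : R} (hx : x ∈ R⁰) :
    ∃ k, maximalIdeal R ^ k ≤ Ideal.span {x} := by
  have : Ring.KrullDimLE 0 (R ⧸ Ideal.span {x}) := by
    have h := (ringKrullDim_quotient_succ_le_of_nonZeroDivisor hx).trans hdim
    rw [Ring.krullDimLE_iff]
    exact ENat.WithBot.add_le_add_natCast_right_iff.mp (by exact_mod_cast h)
  have : IsArtinianRing (R ⧸ Ideal.span {x}) :=
    isArtinianRing_iff_isNoetherianRing_krullDimLE_zero.mpr ⟨inferInstance, this⟩
  exact exists_maximalIdeal_pow_le_of_isArtinianRing_quotient _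

theorem IsLocalRing.exists_notMem_mul_mem_of_maximalIdeal_pow_le [IsLocalRing R] {J : Ideal R}
    (hJ : J ≠ ⊤) {k : ℕ} (hk : maximalIdeal R ^ k ≤ J) :
    ∃ s ∉ J, ∀ a ∈ maximalIdeal R, s * a ∈ J := by
  induction k with
  | zero => exact absurd (top_le_iff.mp (by simpa using hk)) hJ
  | succ k ih =>
    by_cases hk' : maximalIdeal R ^ k ≤ J
    · exact ih hk'
    obtain ⟨s, hs, hsJ⟩ := SetLike.not_le_iff_exists.mp hk'
    exact ⟨s, hsJ, fun a ha => hk (pow_succ (maximalIdeal R) k ▸ Ideal.mul_mem_mul hs ha)⟩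

open Submodule in
theorem Submodule.exists_linearMap_sup_span_singleton {M N : Type} [AddCommGroup M] [Module R M]
    [AddCommGroup N] [Module R N] (P : Submodule R M) (b : M) (n : N)
    (h : ∀ r : R, r • b ∈ P → r • n = 0) :
    ∃ φ : ↥(P ⊔ R ∙ b) →ₗ[R] N, (∀ a (ha : a ∈ P), φ ⟨a, mem_sup_left ha⟩ = 0) ∧
      φ ⟨b, mem_sup_right (mem_span_singleton_self b)⟩ = n := by
  set Q := P.comap (P ⊔ R ∙ b).subtype
  set g : R →ₗ[R] ↥(P ⊔ R ∙ b) ⧸ Q :=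
    Q.mkQ ∘ₗ LinearMap.toSpanSingleton R _ ⟨b, mem_sup_right (mem_span_singleton_self b)⟩
  have hg : Function.Surjective g := by
    rintro ⟨⟨a, ha⟩⟩
    obtain ⟨p, hp, c, hc, rfl⟩ := mem_sup.mp ha
    obtain ⟨r, rfl⟩ := mem_span_singleton.mp hc
    refine ⟨r, (Quotient.eq _).mpr ?_⟩
    simpa [Q] using neg_mem hp
  have hker : LinearMap.ker g ≤ LinearMap.ker (LinearMap.toSpanSingleton R N n) := by
    intro r hr
    simpa [g, Q] using h r (by simpa [g, Q] using hr)
  refine ⟨(LinearMap.ker g).liftQ _ hker ∘ₗ (g.quotKerEquivOfSurjective hg).symm.toLinearMap ∘ₗ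
    Q.mkQ, fun a ha => ?_, ?_⟩
  · have : Q.mkQ ⟨a, mem_sup_left ha⟩ = 0 := (Quotient.mk_eq_zero _).mpr ha
    simp only [LinearMap.comp_apply, this, map_zero]
  · have : g 1 = Q.mkQ ⟨b, mem_sup_right (mem_span_singleton_self b)⟩ := by simp [g]
    rw [LinearMap.comp_apply, LinearMap.comp_apply, ← this, LinearEquiv.coe_coe,
      ← LinearMap.quotKerEquivOfSurjective_apply_mk g hg, LinearEquiv.symm_apply_apply,
      liftQ_apply, LinearMap.toSpanSingleton_apply, one_smul]

def quotMul (a b : R) : R ⧸ Ideal.span {b} →ₗ[R] R ⧸ Ideal.span {a * b} :=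
  Submodule.mapQ _ _ (LinearMap.mulLeft R a) fun x hx => by
    obtain ⟨r, rfl⟩ := Ideal.mem_span_singleton'.mp hx
    exact Ideal.mem_span_singleton'.mpr ⟨r, by simp only [LinearMap.mulLeft_apply]; ring⟩

@[simp]
theorem quotMul_mk (a b x : R) :
    quotMul a b (Ideal.Quotient.mk _ x) = Ideal.Quotient.mk _ (a * x) :=
  rfl

theorem quotMul_injective {a : R} (ha : a ∈ R⁰) (b : R) : Function.Injective (quotMul a b) := by
  rw [← LinearMap.ker_eq_bot, LinearMap.ker_eq_bot']
  intro v hv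
  obtain ⟨x, rfl⟩ := Ideal.Quotient.mk_surjective v
  rw [quotMul_mk, Ideal.Quotient.eq_zero_iff_mem, Ideal.mem_span_singleton] at hv
  obtain ⟨r, hr⟩ := hv
  rw [Ideal.Quotient.eq_zero_iff_mem, Ideal.mem_span_singleton]
  exact ⟨r, (mul_cancel_left_mem_nonZeroDivisors ha).mp (by rw [hr, mul_assoc])⟩

theorem mem_range_quotMul (a : R) {b : R} (hb : b ∈ R⁰) {v : R ⧸ Ideal.span {a * b}}
    (hv : b • v = 0) : v ∈ LinearMap.range (quotMul a b) := by
  obtain ⟨x, rfl⟩ := Ideal.Quotient.mk_surjective v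
  change Ideal.Quotient.mk _ (b * x) = 0 at hv
  rw [Ideal.Quotient.eq_zero_iff_mem, Ideal.mem_span_singleton] at hv
  obtain ⟨r, hr⟩ := hv
  refine ⟨Ideal.Quotient.mk _ r, ?_⟩
  rw [quotMul_mk]
  congr 1
  exact (mul_cancel_left_mem_nonZeroDivisors hb).mp (by rw [hr]; ring)

/-- Baer's criterion for `R ⧸ (y)` over itself, read on ideals `J` of `R`: a map `J → R ⧸ (y)`
killing `J ∩ (y)` is a map on the ideal `(J + (y)) ⧸ (y)` of `R ⧸ (y)`. -/
def QuotSpanBaer (y : R) : Prop :=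
  ∀ (J : Ideal R) (φ : J →ₗ[R] R ⧸ Ideal.span {y}),
    (∀ a (ha : a ∈ J), a ∈ Ideal.span {y} → φ ⟨a, ha⟩ = 0) →
    ∃ c, ∀ a (ha : a ∈ J), φ ⟨a, ha⟩ = Ideal.Quotient.mk _ (c * a)

/-- In `R ⧸ (y)` every ideal is the annihilator of its annihilator. -/
def QuotSpanDoubleAnnihilator (y : R) : Prop :=
  ∀ J : Ideal R, y ∈ J → ∀ b ∉ J,
    ∃ z, (∀ a ∈ J, z * a ∈ Ideal.span {y}) ∧ z * b ∉ Ideal.span {y}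

theorem quotSpanBaer_of_injective {y : R}
    [Module.Injective (R ⧸ Ideal.span {y}) (R ⧸ Ideal.span {y})] : QuotSpanBaer y := by
  intro J φ hφ
  set A := R ⧸ Ideal.span {y}
  have hmk : Function.Surjective (algebraMap R A) := Ideal.Quotient.mk_surjective
  set M : Ideal A := J.map (Ideal.Quotient.mk _)
  set f : J →ₗ[R] M.restrictScalars R := ((Ideal.span {y}).mkQ ∘ₗ J.subtype).codRestrict _
    fun a => Ideal.mem_map_of_mem _ a.2
  have hf : Function.Surjective f := by
    rintro ⟨m, hm⟩
    obtain ⟨a, ha, rfl⟩ := (Ideal.mem_map_iff_of_surjective _ Ideal.Quotient.mk_surjective).mp hm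
    exact ⟨⟨a, ha⟩, rfl⟩
  have hker : LinearMap.ker f ≤ LinearMap.ker φ := by
    rintro ⟨a, ha⟩ hfa
    exact hφ a ha (Ideal.Quotient.eq_zero_iff_mem.mp (congrArg Subtype.val hfa))
  set τ : M →ₗ[R] A :=
    (LinearMap.ker f).liftQ φ hker ∘ₗ (f.quotKerEquivOfSurjective hf).symm.toLinearMap
  obtain ⟨h, hh⟩ := Module.Injective.out M.subtype Subtype.val_injective
    (τ.extendScalarsOfSurjective hmk)
  obtain ⟨c, hc⟩ := Ideal.Quotient.mk_surjective (h 1)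
  refine ⟨c, fun a ha => ?_⟩
  have hfa : (f.quotKerEquivOfSurjective hf).symm (f ⟨a, ha⟩) = Submodule.Quotient.mk ⟨a, ha⟩ := by
    rw [LinearEquiv.symm_apply_eq, LinearMap.quotKerEquivOfSurjective_apply_mk]
  have hτ : τ ⟨_, Ideal.mem_map_of_mem _ ha⟩ = φ ⟨a, ha⟩ := by
    show (LinearMap.ker f).liftQ φ hker ((f.quotKerEquivOfSurjective hf).symm (f ⟨a, ha⟩)) = _
    rw [hfa, Submodule.liftQ_apply]
  rw [← hτ, ← LinearMap.extendScalarsOfSurjective_apply hmk, ← hh]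
  calc h (Ideal.Quotient.mk _ a) = Ideal.Quotient.mk _ a • h 1 := by
        rw [← map_smul, smul_eq_mul, mul_one]
    _ = Ideal.Quotient.mk _ (c * a) := by rw [← hc, smul_eq_mul, ← map_mul, mul_comm]

namespace QuotSpanBaer

theorem one : QuotSpanBaer (1 : R) :=
  fun J _ hφ => ⟨0, fun a ha => by
    rw [zero_mul, map_zero, hφ a ha (by rw [Ideal.span_singleton_one]; exact Submodule.mem_top)]⟩

theorem exists_mk_mul_mul {a b c : R} (ha : a ∈ R⁰) (hb : b ∈ R⁰) (hB : QuotSpanBaer b)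
    (hc : a * b = c) (L : Ideal R) (φ : L →ₗ[R] R ⧸ Ideal.span {c})
    (hφ : ∀ x (hx : x ∈ L), x ∈ Ideal.span {b} → φ ⟨x, hx⟩ = 0) :
    ∃ d, ∀ x (hx : x ∈ L), φ ⟨x, hx⟩ = Ideal.Quotient.mk _ (a * (d * x)) := by
  subst hc
  have hrange (x : L) : φ x ∈ LinearMap.range (quotMul a b) := by
    refine mem_range_quotMul a hb ?_
    rw [← map_smul]
    exact hφ _ _ (Ideal.mem_span_singleton'.mpr ⟨x, mul_comm _ _⟩)
  set g := φ.codRestrictOfInjective _ (quotMul_injective ha b) hrange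
  obtain ⟨d, hd⟩ := hB L g fun x hx hxb => quotMul_injective ha b <| by
    rw [LinearMap.codRestrictOfInjective_comp_apply, hφ x hx hxb, map_zero]
  refine ⟨d, fun x hx => ?_⟩
  rw [← LinearMap.codRestrictOfInjective_comp_apply φ _ (quotMul_injective ha b) hrange, hd,
    quotMul_mk]

theorem mul {t y : R} (ht : t ∈ R⁰) (hy : y ∈ R⁰) (hBt : QuotSpanBaer t)
    (hBy : QuotSpanBaer y) : QuotSpanBaer (t * y) := by
  intro J φ hφ
  set J₁ : Ideal R := Submodule.comap (LinearMap.mulLeft R t) J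
  obtain ⟨c, hc⟩ := exists_mk_mul_mul ht hy hBy rfl J₁
    (φ ∘ₗ (LinearMap.mulLeft R t).restrict fun _ hr => hr) fun r hr hry => by
      obtain ⟨u, rfl⟩ := Ideal.mem_span_singleton'.mp hry
      exact hφ (t * (u * y)) _ (Ideal.mem_span_singleton'.mpr ⟨u, by ring⟩)
  set ψ := φ - (Ideal.span {t * y}).mkQ ∘ₗ LinearMap.mulLeft R c ∘ₗ J.subtype
  obtain ⟨d, hd⟩ := exists_mk_mul_mul hy ht hBt (mul_comm y t) J ψ fun a ha hat => by
    obtain ⟨r, rfl⟩ := Ideal.mem_span_singleton.mp hat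
    change φ ⟨t * r, ha⟩ - Ideal.Quotient.mk _ (c * (t * r)) = 0
    rw [sub_eq_zero, mul_left_comm]
    exact hc r ha
  refine ⟨c + y * d, fun a ha => ?_⟩
  have hψ : φ ⟨a, ha⟩ = ψ ⟨a, ha⟩ + Ideal.Quotient.mk _ (c * a) := by simp [ψ]
  rw [hψ, hd a ha, ← map_add]
  ring_nf

theorem pow {t : R} (ht : t ∈ R⁰) (hB : QuotSpanBaer t) (n : ℕ) : QuotSpanBaer (t ^ n) := by
  induction n with
  | zero => exact pow_zero t ▸ one
  | succ n ih => exact pow_succ' t n ▸ mul ht (pow_mem ht n) hB ih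

theorem quotSpanDoubleAnnihilator [IsLocalRing R] {y : R} (hB : QuotSpanBaer y) {k : ℕ}
    (hk : maximalIdeal R ^ k ≤ Ideal.span {y}) : QuotSpanDoubleAnnihilator y := by
  intro J hyJ b hb
  have hyJ' : Ideal.span {y} ≤ J := (Ideal.span_singleton_le_iff_mem J).mpr hyJ
  have hJ : J ≠ ⊤ := fun h => hb (h ▸ Submodule.mem_top)
  obtain ⟨s, hs, hsm⟩ := IsLocalRing.exists_notMem_mul_mem_of_maximalIdeal_pow_le
    (ne_top_of_le_ne_top hJ hyJ') hk
  -- `b ∉ J` makes `J : b` proper, hence inside `𝔪`, which kills the socle element `s`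
  have hsep (r : R) (hr : r • b ∈ J) : r • Ideal.Quotient.mk (Ideal.span {y}) s = 0 := by
    have hrm : r ∈ maximalIdeal R := fun hru => hb ((J.smul_mem_iff_of_isUnit hru).mp hr)
    change Ideal.Quotient.mk _ (r * s) = 0
    rw [mul_comm, Ideal.Quotient.eq_zero_iff_mem]
    exact hsm r hrm
  obtain ⟨φ, hφJ, hφb⟩ := J.exists_linearMap_sup_span_singleton b _ hsep
  obtain ⟨c, hc⟩ := hB _ φ fun a _ hay => hφJ a (hyJ' hay)
  refine ⟨c, fun a ha => ?_, fun hcb => hs ?_⟩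
  · rw [← Ideal.Quotient.eq_zero_iff_mem, ← hc a (Submodule.mem_sup_left ha), hφJ a ha]
  · rwa [← Ideal.Quotient.eq_zero_iff_mem, ← hφb, hc, Ideal.Quotient.eq_zero_iff_mem]

end QuotSpanBaer

theorem QuotSpanDoubleAnnihilator.of_mul {x u : R} (hu : u ∈ R⁰)
    (h : QuotSpanDoubleAnnihilator (x * u)) : QuotSpanDoubleAnnihilator x := by
  intro J hxJ b hb
  have hcancel {a c : R} (hac : u * a = u * c) : a = c :=
    (mul_cancel_left_mem_nonZeroDivisors hu).mp hac
  obtain ⟨z, hzJ, hzb⟩ := h (Submodule.map (LinearMap.mulLeft R u) J) ⟨x, hxJ, mul_comm u x⟩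
    (u * b) fun ⟨a, ha, hab⟩ => hb (hcancel hab ▸ ha)
  refine ⟨z, fun a ha => ?_, fun hzb' => hzb ?_⟩
  · obtain ⟨e, he⟩ := Ideal.mem_span_singleton'.mp (hzJ (u * a) ⟨a, ha, rfl⟩)
    exact Ideal.mem_span_singleton'.mpr ⟨e, hcancel (by linear_combination he)⟩
  · obtain ⟨e, he⟩ := Ideal.mem_span_singleton'.mp hzb'
    exact Ideal.mem_span_singleton'.mpr ⟨e, by linear_combination u * he⟩

theorem IsGorensteinLocalOfDimOne.quotSpanDoubleAnnihilator (hR : IsGorensteinLocalOfDimOne R)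
    {x : R} (hx : x ∈ R⁰) : QuotSpanDoubleAnnihilator x := by
  obtain ⟨_, _, hdim, t, htm, ht, _⟩ := hR
  obtain ⟨k, hk⟩ := exists_maximalIdeal_pow_le_span_singleton hdim.le hx
  obtain ⟨w, hw⟩ : x ∣ t ^ (k + 1) := Ideal.mem_span_singleton.mp <|
    hk (Ideal.pow_le_pow_right k.le_succ (Ideal.pow_mem_pow htm (k + 1)))
  have htk : t ^ (k + 1) ∈ R⁰ := pow_mem ht _
  obtain ⟨l, hl⟩ := exists_maximalIdeal_pow_le_span_singleton hdim.le htk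
  have hD := (quotSpanBaer_of_injective.pow ht (k + 1)).quotSpanDoubleAnnihilator hl
  rw [hw] at hD htk
  exact hD.of_mul (mul_mem_nonZeroDivisors.mp htk).2

theorem Ideal.eq_span_singleton_of_mul_eq {I : Ideal R} {x i r : R} (hx : x ∈ R⁰)
    (hrI : ∀ a ∈ I, r * a ∈ Ideal.span {x}) (hi : i ∈ I) (hir : i * r = x) :
    I = Ideal.span {i} := by
  refine le_antisymm (fun a ha => ?_) ((Ideal.span_singleton_le_iff_mem I).mpr hi)
  obtain ⟨e, he⟩ := Ideal.mem_span_singleton'.mp (hrI a ha)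
  refine Ideal.mem_span_singleton'.mpr ⟨e, (mul_cancel_left_mem_nonZeroDivisors hx).mp ?_⟩
  linear_combination a * hir + i * he

theorem dvd_of_multEnd_eq_range {I : Ideal R}
    (hend : multEnd (idealImage R I) = Set.range (algebraMap R (FractionRing R))) {s t : R}
    (ht : t ∈ R⁰) (hst : ∀ i ∈ I, ∃ i' ∈ I, s * i = t * i') : t ∣ s := by
  have hmem : IsLocalization.mk' (FractionRing R) s ⟨t, ht⟩ ∈ multEnd (idealImage R I) := by
    rintro _ ⟨i, hi, rfl⟩
    obtain ⟨i', hi', hii'⟩ := hst i hi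
    refine ⟨i', hi', ?_⟩
    rw [mul_comm, IsLocalization.mul_mk'_eq_mk'_of_mul, mul_comm, hii']
    exact (IsLocalization.mk'_mul_cancel_left i' (⟨t, ht⟩ : R⁰)).symm
  rw [hend] at hmem
  obtain ⟨c, hc⟩ := hmem
  rw [eq_comm, IsLocalization.mk'_eq_iff_eq_mul, ← map_mul] at hc
  exact ⟨c, by rw [IsFractionRing.injective R (FractionRing R) hc, mul_comm]⟩

theorem exists_mul_eq_mul_of_not_exists_mul_eq [IsLocalRing R] {I : Ideal R} {x t s : R}
    (ht : t ∈ R⁰) (hxI : x ∈ I) (hD : QuotSpanDoubleAnnihilator x)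
    (hsm : ∀ a ∈ maximalIdeal R, s * a ∈ Ideal.span {t})
    (hinv : ¬∃ i ∈ I, ∃ r, (∀ a ∈ I, r * a ∈ Ideal.span {x}) ∧ i * r = x) :
    ∀ i ∈ I, ∃ i' ∈ I, s * i = t * i' := by
  have hm {i r c : R} (hi : i ∈ I) (hrI : ∀ a ∈ I, r * a ∈ Ideal.span {x})
      (hc : i * r = x * c) : c ∈ maximalIdeal R := fun hcu => by
    obtain ⟨c', hc'⟩ := hcu.exists_right_inv
    refine hinv ⟨i, hi, r * c', fun a ha => ?_, by rw [← mul_assoc, hc, mul_assoc, hc', mul_one]⟩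
    rw [mul_right_comm]
    exact Ideal.mul_mem_right c' _ (hrI a ha)
  intro i hi
  have him : i ∈ maximalIdeal R :=
    hm hi (fun a _ => Ideal.mul_mem_right a _ (Ideal.mem_span_singleton_self x)) (mul_comm i x)
  obtain ⟨b, hb⟩ := Ideal.mem_span_singleton.mp (hsm i him)
  refine ⟨b, by_contra fun hbI => ?_, hb⟩
  obtain ⟨z, hzI, hzb⟩ := hD I hxI b hbI
  obtain ⟨j, hj⟩ := Ideal.mem_span_singleton.mp (hzI i hi)
  obtain ⟨u, hu⟩ := Ideal.mem_span_singleton.mp (hsm j (hm hi hzI (by rw [mul_comm, hj])))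
  refine hzb (Ideal.mem_span_singleton.mpr ⟨u, (mul_cancel_left_mem_nonZeroDivisors ht).mp ?_⟩)
  linear_combination -z * hb + s * hj + x * hu

end

theorem stmt_10 (R : Type) [CommRing R] (hGor : IsGorensteinLocalOfDimOne R)
    (I : Ideal R) (hreg : ∃ x ∈ I, x ∈ nonZeroDivisors R)
    (hend : multEnd (idealImage R I) = Set.range (algebraMap R (FractionRing R))) :
    I.IsPrincipal := by
  obtain ⟨x, hxI, hx⟩ := hreg
  by_cases hinv : ∃ i ∈ I, ∃ r, (∀ a ∈ I, r * a ∈ Ideal.span {x}) ∧ i * r = x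
  · obtain ⟨i, hi, r, hrI, hir⟩ := hinv
    exact ⟨i, Ideal.eq_span_singleton_of_mul_eq hx hrI hi hir⟩
  have hD := hGor.quotSpanDoubleAnnihilator hx
  obtain ⟨_, _, hdim, t, htm, ht, _⟩ := hGor
  obtain ⟨k, hk⟩ := exists_maximalIdeal_pow_le_span_singleton hdim.le ht
  have htop : Ideal.span {t} ≠ ⊤ := fun h => htm (Ideal.span_singleton_eq_top.mp h)
  obtain ⟨s, hs, hsm⟩ := IsLocalRing.exists_notMem_mul_mem_of_maximalIdeal_pow_le htop hk
  exact absurd (Ideal.mem_span_singleton.mpr <| dvd_of_multEnd_eq_range hend ht <|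
    exists_mul_eq_mul_of_not_exists_mul_eq ht hxI hD hsm hinv) hs
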